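/- arXiv:1610.00945 — 2 statements merged into one kernel-verified Lean document; each statement's English description precedes it below -/
import Mathlib

section
/- With the unfolding operator (T_ε u)(x,y) = u(ε[x/ε] + εy), the norm is preserved: for all u ∈ L^p(Ω_ε) with 1 ≤ p < ∞, one has ‖T_ε u‖_{L^p(Ω × Y_*)} = ‖u‖_{L^p(Ω_ε)}. -/
open MeasureTheory Set
open scoped ENNReal
noncomputable section

/-- Euclidean space `ℝ^d`. -/
abbrev E (d : ℕ) := EuclideanSpace ℝ (Fin d)

/-- The unit cell `Y = [0,1)^d`. -/
def unitCell (d : ℕ) : Set (E d) := {y | ∀ i, y i ∈ Ico (0:ℝ) 1}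

/-- `ε[x/ε]`, the componentwise floor part. -/
def floorVec (d : ℕ) (ε : ℝ) (x : E d) : E d := WithLp.toLp 2 (fun i => ε * (⌊x i / ε⌋ : ℝ))

/-- `{x/ε}`, the componentwise fractional part. -/
def fracVec (d : ℕ) (ε : ℝ) (x : E d) : E d := WithLp.toLp 2 (fun i => Int.fract (x i / ε))

/-- The periodic unfolding operator `(T_ε u)(x,y) = u(ε[x/ε] + εy)`. -/
def unfoldOp {d : ℕ} {F : Type*} [AddCommGroup F] [Module ℝ F] (ε : ℝ) (u : E d → F) :
    E d × E d → F :=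
  fun p => u (floorVec d ε p.1 + ε • p.2)

/-- Embedding of integer lattice points. -/
def zvec (d : ℕ) (ξ : Fin d → ℤ) : E d := WithLp.toLp 2 (fun i => (ξ i : ℝ))

/-- The macroscopic domain `Ω = ∏_i [0, l_i)`. -/
def bigOmega (d : ℕ) (l : Fin d → ℝ) : Set (E d) := {x | ∀ i, x i ∈ Ico 0 (l i)}

/-- Nodal points `N_ε = {ξ ∈ ℤ^d | ε(ξ + Y) ⊆ Ω}`. -/
def nodal (d : ℕ) (ε : ℝ) (l : Fin d → ℝ) : Set (Fin d → ℤ) :=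
  {ξ | ∀ y ∈ unitCell d, ε • (zvec d ξ + y) ∈ bigOmega d l}

/-- The perforated domain `Ω_ε = ⋃_{ξ ∈ N_ε} ε(ξ + Y_*°)`. -/
def perfDomain (d : ℕ) (ε : ℝ) (l : Fin d → ℝ) (Ystar : Set (E d)) : Set (E d) :=
  ⋃ ξ ∈ nodal d ε l, (fun y => ε • (zvec d ξ + y)) '' interior Ystar

/-- The product measure on `Ω × Y_*`. -/
def twoScaleMeasure (d : ℕ) (l : Fin d → ℝ) (Ystar : Set (E d)) : Measure (E d × E d) :=
  (volume.restrict (bigOmega d l)).prod (volume.restrict Ystar)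

/-- The ε-cell `ε([x/ε] + Y_*)` containing `x`. -/
def cellOf (d : ℕ) (ε : ℝ) (Ystar : Set (E d)) (x : E d) : Set (E d) :=
  (fun y => floorVec d ε x + ε • y) '' Ystar

/-- The folding (averaging) operator `(F_ε U)(x) = ⨍_{ε([x/ε]+Y_*)} U(z, {x/ε}) dz`. -/
def foldOp {d : ℕ} {F : Type*} [NormedAddCommGroup F] [NormedSpace ℝ F]
    (ε : ℝ) (Ystar : Set (E d)) (U : E d × E d → F) : E d → F :=
  fun x => ⨍ z in cellOf d ε Ystar x, U (z, fracVec d ε x)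

/-! The map `(x, y) ↦ ε[x/ε] + εy` sends the product measure on `Ω × Y_*` to Lebesgue measure
on `Ω_ε`. Indeed `Ω` is the disjoint union of the cells `ε(ξ + Y)`, `ξ ∈ N_ε`; on such a cell the
map does not depend on `x` and is the affine map `y ↦ ε(ξ + y)`, whose Jacobian `ε^d` is
compensated by the volume `ε^d` of the cell. Replacing `Y_*` by its interior changes the image
only by a null set. The norm identity is then the change of variables along a measure-preserving
map. -/

open Function
open scoped Pointwise

namespace Unfolding

variable {d : ℕ} {ε : ℝ}

def cellMap (ε : ℝ) (ξ : Fin d → ℤ) : E d → E d := fun y => ε • (zvec d ξ + y)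

def latticeCell (d : ℕ) (ε : ℝ) (ξ : Fin d → ℤ) : Set (E d) := {x | ∀ i, ⌊x i / ε⌋ = ξ i}

def unfoldMap (ε : ℝ) : E d × E d → E d := fun p => floorVec d ε p.1 + ε • p.2

lemma measurable_floor_coord_div (i : Fin d) : Measurable fun x : E d => ⌊x i / ε⌋ :=
  Measurable.floor (by fun_prop)

lemma measurable_floorVec : Measurable (floorVec d ε) :=
  (WithLp.measurable_toLp 2 _).comp <| measurable_pi_lambda _ fun i =>
    (measurable_from_top.comp (measurable_floor_coord_div i)).const_mul ε

lemma measurable_unfoldMap : Measurable (unfoldMap (d := d) ε) :=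
  (measurable_floorVec.comp measurable_fst).add (measurable_snd.const_smul ε)

lemma measurableSet_latticeCell (ξ : Fin d → ℤ) : MeasurableSet (latticeCell d ε ξ) := by
  rw [latticeCell, ofPred_forall]
  exact MeasurableSet.iInter fun i => measurable_floor_coord_div i (measurableSet_singleton (ξ i))

lemma pairwise_disjoint_latticeCell : Pairwise (Disjoint on latticeCell d ε) :=
  fun _ _ hne => disjoint_left.mpr fun _ hx hx' => hne (funext fun i => (hx i).symm.trans (hx' i))

lemma cellMap_eq (ξ : Fin d → ℤ) : cellMap ε ξ = fun y => ε • zvec d ξ + ε • y := by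
  funext y; exact smul_add ε _ y

lemma measurableEmbedding_cellMap (hε : ε ≠ 0) (ξ : Fin d → ℤ) :
    MeasurableEmbedding (cellMap ε ξ) := by
  rw [cellMap_eq]
  exact ((Homeomorph.smulOfNeZero ε hε).trans
    (Homeomorph.addLeft (ε • zvec d ξ))).measurableEmbedding

lemma volume_image_cellMap (hε : 0 < ε) (ξ : Fin d → ℤ) (B : Set (E d)) :
    volume (cellMap ε ξ '' B) = ENNReal.ofReal (ε ^ d) * volume B := by
  have himage : cellMap ε ξ '' B = (ε • zvec d ξ + ·) '' (ε • B) := by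
    rw [cellMap_eq, ← image_smul, image_image]
  rw [himage, image_add_left, measure_preimage_add, Measure.addHaar_smul,
    finrank_euclideanSpace_fin, abs_of_nonneg (pow_nonneg hε.le d)]

lemma image_cellMap_unitCell (hε : 0 < ε) (ξ : Fin d → ℤ) :
    cellMap ε ξ '' unitCell d = latticeCell d ε ξ := by
  ext x
  constructor
  · rintro ⟨y, hy, rfl⟩ i
    have hyi : ⌊y i⌋ = 0 := Int.floor_eq_zero_iff.mpr (hy i)
    change ⌊ε * ((ξ i : ℝ) + y i) / ε⌋ = ξ i
    rw [mul_div_cancel_left₀ _ hε.ne', Int.floor_intCast_add, hyi, add_zero]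
  · intro hx
    refine ⟨WithLp.toLp 2 fun i => Int.fract (x i / ε),
      fun i => ⟨Int.fract_nonneg _, Int.fract_lt_one _⟩, ?_⟩
    ext i
    change ε * ((ξ i : ℝ) + Int.fract (x i / ε)) = x i
    rw [← hx i, Int.floor_add_fract, mul_div_cancel₀ _ hε.ne']

lemma volume_unitCell : volume (unitCell d) = 1 := by
  have h : unitCell d = (MeasurableEquiv.toLp 2 (Fin d → ℝ)).symm ⁻¹'
      (univ.pi fun _ => Ico (0 : ℝ) 1) := by
    ext x; simp [unitCell]
  rw [h, (EuclideanSpace.volume_preserving_symm_measurableEquiv_toLp (Fin d)).measure_preimage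
    (MeasurableSet.univ_pi fun _ => measurableSet_Ico).nullMeasurableSet, volume_pi_pi]
  simp [Real.volume_Ico]

lemma volume_latticeCell (hε : 0 < ε) (ξ : Fin d → ℤ) :
    volume (latticeCell d ε ξ) = ENNReal.ofReal (ε ^ d) := by
  rw [← image_cellMap_unitCell hε, volume_image_cellMap hε, volume_unitCell, mul_one]

lemma unfoldMap_of_mem_latticeCell {ξ : Fin d → ℤ} {x : E d} (hx : x ∈ latticeCell d ε ξ)
    (y : E d) : unfoldMap ε (x, y) = cellMap ε ξ y := by
  rw [unfoldMap, cellMap_eq]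
  congr 1
  ext i
  change ε * (⌊x i / ε⌋ : ℝ) = ε * (ξ i : ℝ)
  rw [hx i]

lemma ofReal_smul_map_cellMap_restrict (hε : 0 < ε) (ξ : Fin d → ℤ) (B : Set (E d)) :
    ENNReal.ofReal (ε ^ d) • (volume.restrict B).map (cellMap ε ξ)
      = volume.restrict (cellMap ε ξ '' B) := by
  have hemb := measurableEmbedding_cellMap hε.ne' ξ
  ext A hA
  rw [Measure.smul_apply, hemb.map_apply, Measure.restrict_apply (hemb.measurable hA),
    Measure.restrict_apply hA, smul_eq_mul, ← volume_image_cellMap hε, image_preimage_inter]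

lemma map_unfoldMap_latticeCell_prod (hε : 0 < ε) (ξ : Fin d → ℤ) {B : Set (E d)}
    (hB : MeasurableSet B) :
    ((volume.restrict (latticeCell d ε ξ)).prod (volume.restrict B)).map (unfoldMap ε)
      = volume.restrict (cellMap ε ξ '' B) := by
  have hae : unfoldMap ε =ᵐ[(volume.restrict (latticeCell d ε ξ)).prod (volume.restrict B)]
      cellMap ε ξ ∘ Prod.snd := by
    rw [Measure.prod_restrict]
    exact ae_restrict_of_forall_mem ((measurableSet_latticeCell ξ).prod hB)
      fun p hp => unfoldMap_of_mem_latticeCell hp.1 p.2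
  rw [Measure.map_congr hae, ← Measure.map_map (measurableEmbedding_cellMap hε.ne' ξ).measurable
    measurable_snd, Measure.map_snd_prod, Measure.restrict_apply_univ, volume_latticeCell hε,
    Measure.map_smul, ofReal_smul_map_cellMap_restrict hε]

theorem map_unfoldMap_restrict_prod (hε : 0 < ε) (N : Set (Fin d → ℤ)) {B : Set (E d)}
    (hB : MeasurableSet B) (hBY : B ⊆ unitCell d) :
    ((volume.restrict (⋃ ξ ∈ N, latticeCell d ε ξ)).prod (volume.restrict B)).map (unfoldMap ε)
      = volume.restrict (⋃ ξ ∈ N, cellMap ε ξ '' B) := by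
  have hsub (ξ : Fin d → ℤ) : cellMap ε ξ '' B ⊆ latticeCell d ε ξ :=
    image_cellMap_unitCell hε ξ ▸ image_mono hBY
  have hdisj : Pairwise (Disjoint on fun ξ => cellMap ε ξ '' B) := fun ξ η hne =>
    (pairwise_disjoint_latticeCell hne).mono (hsub ξ) (hsub η)
  rw [Measure.restrict_biUnion N.to_countable (pairwise_disjoint_latticeCell.set_pairwise N)
      measurableSet_latticeCell, Measure.prod_sum_left,
    Measure.map_sum measurable_unfoldMap.aemeasurable,
    Measure.restrict_biUnion N.to_countable (hdisj.set_pairwise N)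
      fun ξ => (measurableEmbedding_cellMap hε.ne' ξ).measurableSet_image.mpr hB]
  simp_rw [map_unfoldMap_latticeCell_prod hε _ hB]

variable {l : Fin d → ℝ}

lemma floor_div_mem_nodal (hε : 0 < ε) (hcover : ∀ i, ∃ m : ℕ, l i = m * ε) {x : E d}
    (hx : x ∈ bigOmega d l) : (fun i => ⌊x i / ε⌋) ∈ nodal d ε l := by
  intro y hy i
  obtain ⟨m, hm⟩ := hcover i
  obtain ⟨hx0, hxl⟩ := hx i
  obtain ⟨hy0, hy1⟩ := hy i
  have hfloor_nonneg : (0 : ℝ) ≤ ⌊x i / ε⌋ := by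
    exact_mod_cast Int.floor_nonneg.mpr (div_nonneg hx0 hε.le)
  have hfloor_lt : (⌊x i / ε⌋ : ℝ) + 1 ≤ m := by
    have : ⌊x i / ε⌋ < m := Int.floor_lt.mpr (by rw [div_lt_iff₀ hε]; push_cast; linarith)
    exact_mod_cast this
  change ε * ((⌊x i / ε⌋ : ℝ) + y i) ∈ Ico 0 (l i)
  constructor <;> nlinarith

lemma bigOmega_eq_biUnion_latticeCell (hε : 0 < ε) (hcover : ∀ i, ∃ m : ℕ, l i = m * ε) :
    bigOmega d l = ⋃ ξ ∈ nodal d ε l, latticeCell d ε ξ := by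
  ext x
  simp only [mem_iUnion₂, exists_prop]
  constructor
  · exact fun hx => ⟨_, floor_div_mem_nodal hε hcover hx, fun i => rfl⟩
  · rintro ⟨ξ, hξ, hx⟩
    rw [← image_cellMap_unitCell hε] at hx
    obtain ⟨y, hy, rfl⟩ := hx
    exact hξ y hy

lemma biUnion_image_cellMap_ae_eq_perfDomain (hε : 0 < ε) {Ystar : Set (E d)}
    (hYnull : volume (Ystar \ interior Ystar) = 0) :
    (⋃ ξ ∈ nodal d ε l, cellMap ε ξ '' Ystar) =ᵐ[volume] perfDomain d ε l Ystar := by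
  have hperf_sub : perfDomain d ε l Ystar ⊆ ⋃ ξ ∈ nodal d ε l, cellMap ε ξ '' Ystar :=
    biUnion_mono subset_rfl fun ξ _ => image_mono interior_subset
  have hdiff : (⋃ ξ ∈ nodal d ε l, cellMap ε ξ '' Ystar) \ perfDomain d ε l Ystar
      ⊆ ⋃ ξ ∈ nodal d ε l, cellMap ε ξ '' (Ystar \ interior Ystar) := by
    rintro x ⟨hx, hxperf⟩
    obtain ⟨ξ, hξ, y, hy, rfl⟩ := mem_iUnion₂.mp hx
    have hy_bdry : y ∉ interior Ystar := fun hint =>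
      hxperf (mem_iUnion₂.mpr ⟨ξ, hξ, y, hint, rfl⟩)
    exact mem_iUnion₂.mpr ⟨ξ, hξ, y, ⟨hy, hy_bdry⟩, rfl⟩
  refine (ae_le_set.mpr (measure_mono_null hdiff ?_)).antisymm hperf_sub.eventuallyLE
  exact (measure_biUnion_null_iff (nodal d ε l).to_countable).mpr fun ξ _ => by
    rw [volume_image_cellMap hε, hYnull, mul_zero]

theorem measurePreserving_unfoldMap (hε : 0 < ε) (hcover : ∀ i, ∃ m : ℕ, l i = m * ε)
    {Ystar : Set (E d)} (hYsub : Ystar ⊆ unitCell d) (hYmeas : MeasurableSet Ystar)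
    (hYnull : volume (Ystar \ interior Ystar) = 0) :
    MeasurePreserving (unfoldMap ε) (twoScaleMeasure d l Ystar)
      (volume.restrict (perfDomain d ε l Ystar)) := by
  refine ⟨measurable_unfoldMap, ?_⟩
  rw [twoScaleMeasure, bigOmega_eq_biUnion_latticeCell hε hcover,
    map_unfoldMap_restrict_prod hε _ hYmeas hYsub,
    Measure.restrict_congr_set (biUnion_image_cellMap_ae_eq_perfDomain hε hYnull)]

end Unfolding

theorem unfold_norm_preservation_general (d : ℕ) (l : Fin d → ℝ)
    (ε : ℝ) (hε : 0 < ε)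
    (hcover : ∀ i, ∃ m : ℕ, l i = m * ε)
    (Ystar : Set (E d)) (hYsub : Ystar ⊆ unitCell d) (hYmeas : MeasurableSet Ystar)
    (hYnull : volume (Ystar \ interior Ystar) = 0)
    (p : ℝ≥0∞) (u : E d → ℝ)
    (hu : MemLp u p (volume.restrict (perfDomain d ε l Ystar))) :
    eLpNorm (unfoldOp ε u) p (twoScaleMeasure d l Ystar)
      = eLpNorm u p (volume.restrict (perfDomain d ε l Ystar)) :=
  eLpNorm_comp_measurePreserving hu.1
    (Unfolding.measurePreserving_unfoldMap hε hcover hYsub hYmeas hYnull)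

/-- Norm preservation for the unfolding operator:
`‖T_ε u‖_{L^p(Ω × Y_*)} = ‖u‖_{L^p(Ω_ε)}` for `1 ≤ p < ∞`. -/
theorem unfold_norm_preservation (d : ℕ) (l : Fin d → ℝ) (hl : ∀ i, 0 < l i)
    (ε : ℝ) (hε : 0 < ε) (hεinv : ∃ n : ℕ, ε * n = 1)
    (hcover : ∀ i, ∃ m : ℕ, l i = m * ε)
    (Ystar : Set (E d)) (hYsub : Ystar ⊆ unitCell d) (hYmeas : MeasurableSet Ystar)
    (hYnull : volume (Ystar \ interior Ystar) = 0)
    (p : ℝ≥0∞) (hp : 1 ≤ p) (hp' : p ≠ ∞) (u : E d → ℝ)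
    (hu : MemLp u p (volume.restrict (perfDomain d ε l Ystar))) :
    eLpNorm (unfoldOp ε u) p (twoScaleMeasure d l Ystar)
      = eLpNorm u p (volume.restrict (perfDomain d ε l Ystar)) :=
  unfold_norm_preservation_general d l ε hε hcover Ystar hYsub hYmeas hYnull p u hu
end
end

section
/- With the unfolding operator T_ε as defined, the integration formula ∫_{Ω_ε} u dx = ∫_{Ω × Y_*} (T_ε u)(x,y) dx dy holds for all u ∈ L¹(Ω_ε). -/
open MeasureTheory Set
open scoped ENNReal
noncomputable section

/-! On the cell `ε(ξ + Y)` of `Ω` the unfolding map `(x, y) ↦ ε[x/ε] + εy` is `(x, y) ↦ ε(ξ + y)`,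
which does not depend on `x`; hence it pushes `dx|ε(ξ+Y) ⊗ dy|Y_*` forward to
`|ε(ξ+Y)| · ε⁻ᵈ · dx|ε(ξ+Y_*) = dx|ε(ξ+Y_*)`. Since every `lᵢ` is a multiple of `ε`, the cells
`ε(ξ + Y)`, `ξ ∈ N_ε`, tile `Ω`, so the push-forward of `dx|Ω ⊗ dy|Y_*` is Lebesgue measure on
`⋃ ε(ξ + Y_*)`, which agrees with `Ω_ε` up to the images of the null set `Y_* \ Y_*°`. The
formula is then the change of variables for a push-forward measure. -/

open Module
open scoped Pointwise Function

section AffineHomothety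

variable {F : Type*} [NormedAddCommGroup F] [NormedSpace ℝ F] [MeasurableSpace F] [BorelSpace F]

theorem measurableEmbedding_smul_add {ε : ℝ} (hε : ε ≠ 0) (a : F) :
    MeasurableEmbedding fun y : F => ε • (a + y) :=
  ((Homeomorph.addLeft a).trans (Homeomorph.smulOfNeZero ε hε)).measurableEmbedding

variable [FiniteDimensional ℝ F] (μ : Measure F) [μ.IsAddHaarMeasure]

theorem map_smul_add {ε : ℝ} (hε : ε ≠ 0) (a : F) :
    Measure.map (fun y => ε • (a + y)) μ = ENNReal.ofReal |(ε ^ finrank ℝ F)⁻¹| • μ :=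
  calc Measure.map (fun y => ε • (a + y)) μ
      = Measure.map (ε • ·) (Measure.map (a + ·) μ) :=
        (Measure.map_map (measurable_const_smul ε) (measurable_const_add a)).symm
    _ = _ := by rw [map_add_left_eq_self, Measure.map_addHaar_smul μ hε]

theorem map_smul_add_restrict {ε : ℝ} (hε : ε ≠ 0) (a : F) (S : Set F) :
    Measure.map (fun y => ε • (a + y)) (μ.restrict S) =
      ENNReal.ofReal |(ε ^ finrank ℝ F)⁻¹| • μ.restrict ((fun y => ε • (a + y)) '' S) := by
  have he := measurableEmbedding_smul_add hε a
  rw [← Measure.restrict_smul, ← map_smul_add μ hε a, he.restrict_map,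
    preimage_image_eq S he.injective]

theorem addHaar_image_smul_add (ε : ℝ) (a : F) (S : Set F) :
    μ ((fun y => ε • (a + y)) '' S) = ENNReal.ofReal |ε ^ finrank ℝ F| * μ S := by
  rw [← image_image (ε • ·) (a + ·), image_smul, Measure.addHaar_smul, image_add_left,
    measure_preimage_add]

end AffineHomothety

theorem mul_floor_div_add_mem_Ico {ε t s : ℝ} {m : ℕ} (hε : 0 < ε) (ht : t ∈ Ico 0 (m * ε))
    (hs : s ∈ Ico 0 1) : ε * (⌊t / ε⌋ + s) ∈ Ico 0 (m * ε) := by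
  have hk₀ : (0 : ℝ) ≤ ⌊t / ε⌋ := by exact_mod_cast Int.floor_nonneg.2 (div_nonneg ht.1 hε.le)
  have hkm : (⌊t / ε⌋ : ℝ) + 1 ≤ m := by
    have : ⌊t / ε⌋ < (m : ℤ) := by
      rw [Int.floor_lt, Int.cast_natCast, div_lt_iff₀ hε]
      exact ht.2
    exact_mod_cast this
  constructor
  · exact mul_nonneg hε.le (add_nonneg hk₀ hs.1)
  · nlinarith [hs.2]

section LatticeCells

variable {d : ℕ} {ε : ℝ} {l : Fin d → ℝ} {Ystar : Set (E d)}

def cellMap (d : ℕ) (ε : ℝ) (ξ : Fin d → ℤ) : E d → E d := fun y => ε • (zvec d ξ + y)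

def latticeIndex (d : ℕ) (ε : ℝ) (x : E d) : Fin d → ℤ := fun i => ⌊x i / ε⌋

def unfoldMap (d : ℕ) (ε : ℝ) : E d × E d → E d := fun p => floorVec d ε p.1 + ε • p.2

theorem cellMap_apply (ξ : Fin d → ℤ) (y : E d) (i : Fin d) :
    cellMap d ε ξ y i = ε * (ξ i + y i) := by
  simp [cellMap, zvec, mul_add]

theorem unfoldMap_apply (p : E d × E d) :
    unfoldMap d ε p = cellMap d ε (latticeIndex d ε p.1) p.2 := by
  ext i
  simp [unfoldMap, cellMap, floorVec, latticeIndex, zvec]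

theorem fracVec_mem_unitCell (x : E d) : fracVec d ε x ∈ unitCell d :=
  fun _ => ⟨Int.fract_nonneg _, Int.fract_lt_one _⟩

theorem latticeIndex_cellMap (hε : ε ≠ 0) (ξ : Fin d → ℤ) {y : E d} (hy : y ∈ unitCell d) :
    latticeIndex d ε (cellMap d ε ξ y) = ξ := by
  funext i
  rw [latticeIndex, cellMap_apply, mul_div_cancel_left₀ _ hε, Int.floor_intCast_add,
    Int.floor_eq_zero_iff.2 (hy i), add_zero]

theorem cellMap_latticeIndex_fracVec (hε : ε ≠ 0) (x : E d) :
    cellMap d ε (latticeIndex d ε x) (fracVec d ε x) = x := by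
  ext i
  rw [cellMap_apply]
  simp [latticeIndex, fracVec, mul_div_cancel₀ _ hε]

theorem cellMap_image_unitCell (hε : ε ≠ 0) (ξ : Fin d → ℤ) :
    cellMap d ε ξ '' unitCell d = latticeIndex d ε ⁻¹' {ξ} := by
  ext x
  constructor
  · rintro ⟨y, hy, rfl⟩
    exact latticeIndex_cellMap hε ξ hy
  · intro hx
    exact ⟨fracVec d ε x, fracVec_mem_unitCell x, hx ▸ cellMap_latticeIndex_fracVec hε x⟩

theorem measurableEmbedding_cellMap (hε : ε ≠ 0) (ξ : Fin d → ℤ) :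
    MeasurableEmbedding (cellMap d ε ξ) :=
  measurableEmbedding_smul_add hε _

theorem measurable_latticeIndex : Measurable (latticeIndex d ε) := by
  refine measurable_pi_lambda _ fun i => Int.measurable_floor.comp ?_
  exact ((PiLp.continuous_apply 2 (fun _ : Fin d => ℝ) i).measurable).div_const ε

theorem measurable_unfoldMap : Measurable (unfoldMap d ε) := by
  rw [funext unfoldMap_apply]
  exact (((measurable_of_countable (zvec d)).comp (measurable_latticeIndex.comp measurable_fst)).add
    measurable_snd).const_smul ε

theorem pairwise_disjoint_cellMap_image (hε : ε ≠ 0) {S : Set (E d)} (hS : S ⊆ unitCell d) :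
    Pairwise (Disjoint on fun ξ => cellMap d ε ξ '' S) := by
  intro ξ η hne
  have hsub : ∀ ζ, cellMap d ε ζ '' S ⊆ latticeIndex d ε ⁻¹' {ζ} := fun ζ =>
    cellMap_image_unitCell hε ζ ▸ image_mono hS
  exact ((disjoint_singleton.2 hne).preimage _).mono (hsub ξ) (hsub η)

theorem volume_unitCell : volume (unitCell d) = 1 := by
  have h : unitCell d = WithLp.ofLp ⁻¹' univ.pi fun _ => Ico (0 : ℝ) 1 := by
    ext x
    simp [unitCell]
  rw [h, (PiLp.volume_preserving_ofLp (Fin d)).measure_preimage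
    (MeasurableSet.univ_pi fun _ => measurableSet_Ico).nullMeasurableSet, volume_pi_pi]
  simp

theorem volume_latticeIndex_preimage_singleton (hε : 0 < ε) (ξ : Fin d → ℤ) :
    volume (latticeIndex d ε ⁻¹' {ξ}) = ENNReal.ofReal (ε ^ d) := by
  rw [← cellMap_image_unitCell hε.ne']
  unfold cellMap
  rw [addHaar_image_smul_add, finrank_euclideanSpace_fin, volume_unitCell, mul_one,
    abs_of_pos (pow_pos hε d)]

theorem cellMap_image_interior_ae_eq (hε : ε ≠ 0) (ξ : Fin d → ℤ) {S : Set (E d)}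
    (hS : volume (S \ interior S) = 0) :
    cellMap d ε ξ '' interior S =ᵐ[volume] cellMap d ε ξ '' S := by
  have hinj := (measurableEmbedding_cellMap hε ξ).injective
  refine ae_eq_set.2 ⟨?_, ?_⟩
  · rw [← image_sdiff hinj, sdiff_eq_empty.2 interior_subset, image_empty, measure_empty]
  · rw [← image_sdiff hinj]
    unfold cellMap
    rw [addHaar_image_smul_add, hS, mul_zero]

theorem bigOmega_eq_preimage_nodal (hε : 0 < ε) (hcover : ∀ i, ∃ m : ℕ, l i = m * ε) :
    bigOmega d l = latticeIndex d ε ⁻¹' nodal d ε l := by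
  ext x
  refine ⟨fun hx y hy i => ?_, fun hx => ?_⟩
  · obtain ⟨m, hm⟩ := hcover i
    change cellMap d ε _ y i ∈ _
    rw [cellMap_apply, hm]
    exact mul_floor_div_add_mem_Ico hε (hm ▸ hx i) (hy i)
  · rw [← cellMap_latticeIndex_fracVec hε.ne' x]
    exact hx _ (fracVec_mem_unitCell x)

theorem map_unfoldMap_prod_restrict_cell (hε : 0 < ε) (ξ : Fin d → ℤ) :
    Measure.map (unfoldMap d ε)
        ((volume.restrict (latticeIndex d ε ⁻¹' {ξ})).prod (volume.restrict Ystar)) =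
      volume.restrict (cellMap d ε ξ '' Ystar) := by
  have hC : MeasurableSet (latticeIndex d ε ⁻¹' {ξ}) :=
    measurable_latticeIndex (measurableSet_singleton ξ)
  have hΦ : unfoldMap d ε =ᵐ[(volume.restrict (latticeIndex d ε ⁻¹' {ξ})).prod
      (volume.restrict Ystar)] cellMap d ε ξ ∘ Prod.snd := by
    filter_upwards [Measure.quasiMeasurePreserving_fst.ae (ae_restrict_mem hC)] with p hp
    rw [unfoldMap_apply, show latticeIndex d ε p.1 = ξ from hp, Function.comp_apply]
  rw [Measure.map_congr hΦ, ← Measure.map_map (measurableEmbedding_cellMap hε.ne' ξ).measurable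
    measurable_snd, Measure.map_snd_prod, Measure.restrict_apply_univ, Measure.map_smul,
    volume_latticeIndex_preimage_singleton hε]
  unfold cellMap
  rw [map_smul_add_restrict _ hε.ne', smul_smul, finrank_euclideanSpace_fin,
    abs_of_pos (inv_pos.2 (pow_pos hε d)), ← ENNReal.ofReal_mul (pow_pos hε d).le,
    mul_inv_cancel₀ (pow_pos hε d).ne', ENNReal.ofReal_one, one_smul]

theorem restrict_bigOmega_eq_sum (hε : 0 < ε) (hcover : ∀ i, ∃ m : ℕ, l i = m * ε) :
    volume.restrict (bigOmega d l) =
      Measure.sum fun ξ : nodal d ε l =>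
        volume.restrict (latticeIndex d ε ⁻¹' {(ξ : Fin d → ℤ)}) := by
  rw [bigOmega_eq_preimage_nodal hε hcover, ← biUnion_preimage_singleton, biUnion_eq_iUnion]
  have hdisj :
      Pairwise (Disjoint on fun ξ : nodal d ε l => latticeIndex d ε ⁻¹' {(ξ : Fin d → ℤ)}) :=
    fun ξ η hne => (disjoint_singleton.2 (Subtype.coe_ne_coe.2 hne)).preimage _
  exact Measure.restrict_iUnion hdisj fun ξ => measurable_latticeIndex (measurableSet_singleton _)

theorem map_unfoldMap_twoScaleMeasure (hε : 0 < ε) (hcover : ∀ i, ∃ m : ℕ, l i = m * ε)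
    (hYsub : Ystar ⊆ unitCell d) (hYmeas : MeasurableSet Ystar) :
    Measure.map (unfoldMap d ε) (twoScaleMeasure d l Ystar) =
      volume.restrict (⋃ ξ ∈ nodal d ε l, cellMap d ε ξ '' Ystar) := by
  have hdisj : Pairwise (Disjoint on fun ξ : nodal d ε l => cellMap d ε ξ '' Ystar) :=
    (pairwise_disjoint_cellMap_image hε.ne' hYsub).comp_of_injective Subtype.val_injective
  have hmeas (ξ : nodal d ε l) : MeasurableSet (cellMap d ε ξ '' Ystar) :=
    (measurableEmbedding_cellMap hε.ne' (ξ : Fin d → ℤ)).measurableSet_image.2 hYmeas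
  rw [twoScaleMeasure, restrict_bigOmega_eq_sum hε hcover, Measure.prod_sum_left,
    Measure.map_sum measurable_unfoldMap.aemeasurable, biUnion_eq_iUnion,
    Measure.restrict_iUnion hdisj hmeas]
  exact congrArg Measure.sum
    (funext fun ξ => map_unfoldMap_prod_restrict_cell hε (ξ : Fin d → ℤ))

theorem perfDomain_ae_eq (hε : ε ≠ 0) (hYnull : volume (Ystar \ interior Ystar) = 0) :
    perfDomain d ε l Ystar =ᵐ[volume] ⋃ ξ ∈ nodal d ε l, cellMap d ε ξ '' Ystar :=
  Filter.EventuallyEq.countable_bUnion (to_countable _) fun ξ _ =>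
    cellMap_image_interior_ae_eq hε ξ hYnull

end LatticeCells

theorem unfold_integration_formula_general (d : ℕ) (l : Fin d → ℝ)
    (ε : ℝ) (hε : 0 < ε)
    (hcover : ∀ i, ∃ m : ℕ, l i = m * ε)
    (Ystar : Set (E d)) (hYsub : Ystar ⊆ unitCell d) (hYmeas : MeasurableSet Ystar)
    (hYnull : volume (Ystar \ interior Ystar) = 0)
    (u : E d → ℝ) (hu : Integrable u (volume.restrict (perfDomain d ε l Ystar))) :
    ∫ x, u x ∂(volume.restrict (perfDomain d ε l Ystar))
      = ∫ z, unfoldOp ε u z ∂(twoScaleMeasure d l Ystar) := by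
  have hmap : Measure.map (unfoldMap d ε) (twoScaleMeasure d l Ystar) =
      volume.restrict (perfDomain d ε l Ystar) := by
    rw [map_unfoldMap_twoScaleMeasure hε hcover hYsub hYmeas,
      Measure.restrict_congr_set (perfDomain_ae_eq hε.ne' hYnull)]
  rw [← hmap] at hu ⊢
  exact integral_map measurable_unfoldMap.aemeasurable hu.aestronglyMeasurable

/-- Integration formula for the unfolding operator:
`∫_{Ω_ε} u dx = ∫_{Ω × Y_*} (T_ε u)(x,y) dx dy` for all `u ∈ L¹(Ω_ε)`. -/
theorem unfold_integration_formula (d : ℕ) (l : Fin d → ℝ) (hl : ∀ i, 0 < l i)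
    (ε : ℝ) (hε : 0 < ε) (hεinv : ∃ n : ℕ, ε * n = 1)
    (hcover : ∀ i, ∃ m : ℕ, l i = m * ε)
    (Ystar : Set (E d)) (hYsub : Ystar ⊆ unitCell d) (hYmeas : MeasurableSet Ystar)
    (hYnull : volume (Ystar \ interior Ystar) = 0)
    (u : E d → ℝ) (hu : Integrable u (volume.restrict (perfDomain d ε l Ystar))) :
    ∫ x, u x ∂(volume.restrict (perfDomain d ε l Ystar))
      = ∫ z, unfoldOp ε u z ∂(twoScaleMeasure d l Ystar) :=
  unfold_integration_formula_general d l ε hε hcover Ystar hYsub hYmeas hYnull u hu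
end
end
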